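/- arXiv:2312.05650 — 2 statements merged into one kernel-verified Lean document; each statement's English description precedes it below -/
import Mathlib

section
/- Any retract of a subshift of finite type is a subshift of finite type: if X ⊆ A^Γ is a Γ-SFT, Y ⊆ X is a subshift, and there is a continuous equivariant retraction r : X → Y (r restricted to Y is the identity), then Y is a Γ-SFT. -/
/-- The shift action of an abelian group `Γ` on configurations. -/
def shift {Γ A : Type*} [AddCommGroup Γ] (g : Γ) (x : Γ → A) : Γ → A :=
  fun v => x (v + g)

/-- A subshift: a closed shift-invariant subset of the full shift. -/
def IsSubshift {Γ A : Type*} [AddCommGroup Γ] [TopologicalSpace A] (X : Set (Γ → A)) : Prop :=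
  IsClosed X ∧ ∀ g : Γ, ∀ x ∈ X, shift g x ∈ X

/-- A map of subshifts: continuous and shift-equivariant, carrying `X` into `Y`. -/
def IsSubshiftMap {Γ A B : Type*} [AddCommGroup Γ] [TopologicalSpace A] [TopologicalSpace B]
    (X : Set (Γ → A)) (Y : Set (Γ → B)) (f : (Γ → A) → (Γ → B)) : Prop :=
  ContinuousOn f X ∧ (∀ x ∈ X, f x ∈ Y) ∧
    ∀ g : Γ, ∀ x ∈ X, f (shift g x) = shift g (f x)

/-- A subshift of finite type: defined by a finite window `W` and a set of
forbidden `W`-patterns. -/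
def IsSFT {Γ A : Type*} [AddCommGroup Γ] (X : Set (Γ → A)) : Prop :=
  ∃ (W : Finset Γ) (Forb : Set (W → A)),
    X = { x : Γ → A | ∀ v : Γ, (fun w : W => shift v x ↑w) ∉ Forb }

/-- A retract of a subshift of finite type is a subshift of finite type. -/
theorem stmt9 {Γ A : Type*} [AddCommGroup Γ] [Countable Γ]
    [Fintype A] [TopologicalSpace A] [DiscreteTopology A]
    (X Y : Set (Γ → A)) (hX : IsSubshift X) (hXsft : IsSFT X)
    (hY : IsSubshift Y) (hYX : Y ⊆ X)
    (r : (Γ → A) → (Γ → A)) (hr : IsSubshiftMap X Y r) (hid : ∀ y ∈ Y, r y = y) :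
    IsSFT Y := by
  classical
  obtain ⟨W₀, F₀, hX₀⟩ := hXsft
  obtain ⟨rc, hrY, hre⟩ := hr
  have hXc : IsCompact X := hX.1.isCompact
  -- local windows from continuity
  have key : ∀ x ∈ X, ∃ S : Finset Γ,
      ∀ z ∈ X, (∀ w ∈ S, z w = x w) → r z 0 = r x 0 := by
    intro x hx
    have hc : ContinuousWithinAt (fun z : Γ → A => r z 0) X x :=
      ((continuous_apply (0:Γ)).comp_continuousOn rc) x hx
    have hmem : {z : Γ → A | r z 0 = r x 0} ∈ nhdsWithin x X := by
      have h1 : {r x 0} ∈ nhds (r x 0) := (isOpen_discrete _).mem_nhds rfl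
      exact hc h1
    rcases mem_nhdsWithin.mp hmem with ⟨U, hUopen, hxU, hUsub⟩
    rcases (isOpen_pi_iff.mp hUopen) x hxU with ⟨I, u, hu, hIu⟩
    refine ⟨I, fun z hz hagree => ?_⟩
    have hzU : z ∈ U := hIu (fun i hi => by
      rw [hagree i hi]; exact (hu i hi).2)
    exact hUsub ⟨hzU, hz⟩
  choose! S hS using key
  have hUopen : ∀ x : (Γ → A), IsOpen {z : Γ → A | ∀ w ∈ S x, z w = x w} := by
    intro x
    have heq : {z : Γ → A | ∀ w ∈ S x, z w = x w}
        = ⋂ w ∈ S x, (fun z : Γ → A => z w) ⁻¹' {x w} := by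
      ext z; simp
    rw [heq]
    exact isOpen_biInter_finset fun w _ =>
      (isOpen_discrete _).preimage (continuous_apply w)
  obtain ⟨t, ht⟩ := hXc.elim_finite_subcover
      (fun x : X => {z : Γ → A | ∀ w ∈ S ↑x, z w = (x : Γ → A) w})
      (fun x => hUopen ↑x)
      (fun z hz => Set.mem_iUnion.mpr ⟨⟨z, hz⟩, fun w _ => rfl⟩)
  set W₁ : Finset Γ := t.sup (fun x => S ↑x) with hW₁def
  have hW₁ : ∀ x ∈ X, ∀ z ∈ X, (∀ w ∈ W₁, z w = x w) → r z 0 = r x 0 := by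
    intro x hx z hz hag
    obtain ⟨c, hct, hxc⟩ := Set.mem_iUnion₂.mp (ht hx)
    have hsub : S (c : Γ → A) ⊆ W₁ := Finset.le_sup (f := fun x : X => S ↑x) hct
    have hzc : ∀ w ∈ S (c : Γ → A), z w = (c : Γ → A) w := by
      intro w hw
      rw [hag w (hsub hw)]
      exact hxc w hw
    have h1 := hS (c : Γ → A) c.2 z hz hzc
    have h2 := hS (c : Γ → A) c.2 x hx hxc
    rw [h1, h2]
  set W : Finset Γ := insert 0 (W₀ ∪ W₁) with hWdef
  have h0W : (0:Γ) ∈ W := Finset.mem_insert_self _ _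
  refine ⟨W, {p : W → A | ¬ ∃ z ∈ X, (∀ w : W, z ↑w = p w) ∧ r z 0 = p ⟨0, h0W⟩}, ?_⟩
  ext x
  simp only [Set.mem_setOf_eq, not_not]
  constructor
  · intro hx v
    have hsv : shift v x ∈ Y := hY.2 v x hx
    refine ⟨shift v x, hYX hsv, fun w => rfl, ?_⟩
    rw [hid (shift v x) hsv]
  · intro h
    have hxX : x ∈ X := by
      rw [hX₀]
      intro v
      obtain ⟨z, hzX, hzag, -⟩ := h v
      have hz' : ∀ u : Γ, (fun w : W₀ => shift u z ↑w) ∉ F₀ := by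
        rw [hX₀] at hzX; exact hzX
      have h0 := hz' 0
      have heq : (fun w : W₀ => shift v x ↑w) = (fun w : W₀ => shift 0 z ↑w) := by
        funext w
        have hwW : (↑w : Γ) ∈ W :=
          Finset.mem_insert_of_mem (Finset.mem_union_left _ w.2)
        show x (↑w + v) = z (↑w + 0)
        rw [add_zero]
        exact (hzag ⟨↑w, hwW⟩).symm
      rw [heq]; exact h0
    have hrx : r x = x := by
      funext v
      have heq := hre v x hxX
      obtain ⟨z, hzX, hzag, hz0⟩ := h v
      have hsx : shift v x ∈ X := hX.2 v x hxX
      have hr1 : r (shift v x) 0 = r z 0 := by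
        apply hW₁ z hzX (shift v x) hsx
        intro w hw
        have hwW : w ∈ W :=
          Finset.mem_insert_of_mem (Finset.mem_union_right _ hw)
        exact (hzag ⟨w, hwW⟩).symm
      calc r x v = r x (0 + v) := by rw [zero_add]
        _ = r (shift v x) 0 := (congrFun heq 0).symm
        _ = r z 0 := hr1
        _ = x (0 + v) := hz0
        _ = x v := by rw [zero_add]
    exact hrx ▸ hrY x hxX
end

section
/- Let Γ be a countable abelian group, F ⊂ Γ \ {0} a finite symmetric set, and k > |F|. Then the proper-coloring subshift X_{k,F} = {x ∈ {1,…,k}^Γ : x_γ ≠ x_{γ+v} for all γ ∈ Γ, v ∈ F} has the map extension property. -/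
set_option linter.unusedSectionVars false
set_option linter.unusedVariables false
set_option maxHeartbeats 1000000


section Aux

open Classical

variable {Γ : Type} [AddCommGroup Γ] {B : Type} [TopologicalSpace B]

lemma continuous_shift (g : Γ) : Continuous (shift g : (Γ → B) → (Γ → B)) :=
  continuous_pi fun v => continuous_apply (v + g)

lemma shift_shift {A : Type*} (a b : Γ) (x : Γ → A) :
    shift a (shift b x) = shift (a + b) x := by
  funext v; simp [shift, add_assoc]

lemma shift_zero {A : Type*} (x : Γ → A) : shift (0 : Γ) x = x := by
  funext v; simp [shift]

lemma shift_neg_shift {A : Type*} (v : Γ) (x : Γ → A) :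
    shift (-v) (shift v x) = x := by
  rw [shift_shift, neg_add_cancel, shift_zero]

/-- A fresh color avoiding the finite set `s`. -/
noncomputable def freshColor {k : ℕ} (hk : 0 < k) (s : Finset (Fin k)) : Fin k :=
  if h : ∃ c : Fin k, c ∉ s then h.choose else ⟨0, hk⟩

lemma freshColor_notMem {k : ℕ} (hk : 0 < k) {s : Finset (Fin k)} (hs : s.card < k) :
    freshColor hk s ∉ s := by
  have h : ∃ c : Fin k, c ∉ s := by
    by_contra hc
    push_neg at hc
    have hsub : (Finset.univ : Finset (Fin k)) ⊆ s := fun c _ => hc c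
    have := Finset.card_le_card hsub
    simp [Finset.card_univ] at this
    omega
  rw [freshColor, dif_pos h]
  exact h.choose_spec

/-- Index of the first piece containing `z`. -/
noncomputable def idx (Q : ℕ → Set (Γ → B)) (n : ℕ) (z : Γ → B) : ℕ :=
  if h : ∃ i, i ≤ n ∧ z ∈ Q i then Nat.find h else n + 1

lemma idx_spec (Q : ℕ → Set (Γ → B)) (n : ℕ) (z : Γ → B) (h : ∃ i, i ≤ n ∧ z ∈ Q i) :
    idx Q n z ≤ n ∧ z ∈ Q (idx Q n z) := by
  unfold idx
  rw [dif_pos h]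
  exact Nat.find_spec h

lemma idx_min (Q : ℕ → Set (Γ → B)) (n : ℕ) (z : Γ → B) {i : ℕ} (hi : i ≤ n) (hz : z ∈ Q i) :
    idx Q n z ≤ i := by
  unfold idx
  rw [dif_pos ⟨i, hi, hz⟩]
  exact Nat.find_min' _ ⟨hi, hz⟩

lemma idx_le (Q : ℕ → Set (Γ → B)) (n : ℕ) (z : Γ → B) : idx Q n z ≤ n + 1 := by
  unfold idx
  split_ifs with h
  · exact le_trans (Nat.find_spec h).1 (Nat.le_succ n)
  · exact le_refl _

lemma idx_congr (Q : ℕ → Set (Γ → B)) (n : ℕ) {z w : Γ → B}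
    (h : ∀ i, i ≤ n → (w ∈ Q i ↔ z ∈ Q i)) : idx Q n w = idx Q n z := by
  unfold idx
  have hiff : (∃ i, i ≤ n ∧ w ∈ Q i) ↔ ∃ i, i ≤ n ∧ z ∈ Q i :=
    exists_congr fun i => and_congr_right fun hi => h i hi
  split_ifs with h1 h2 h2
  · refine le_antisymm ?_ ?_
    · exact Nat.find_min' _ ⟨(Nat.find_spec h2).1, (h _ (Nat.find_spec h2).1).mpr (Nat.find_spec h2).2⟩
    · exact Nat.find_min' _ ⟨(Nat.find_spec h1).1, (h _ (Nat.find_spec h1).1).mp (Nat.find_spec h1).2⟩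
  · exact absurd (hiff.mp h1) h2
  · exact absurd (hiff.mpr h2) h1
  · rfl

lemma isLocallyConstant_idx (Q : ℕ → Set (Γ → B)) (n : ℕ) (hQ : ∀ i, IsClopen (Q i)) :
    IsLocallyConstant (fun z => idx Q n z) := by
  classical
  rw [IsLocallyConstant.iff_exists_open]
  intro z
  refine ⟨⋂ i ∈ Finset.range (n + 1), (if z ∈ Q i then Q i else (Q i)ᶜ), ?_, ?_, ?_⟩
  · refine isOpen_biInter_finset fun i _ => ?_
    split_ifs
    · exact (hQ i).isOpen
    · exact (hQ i).compl.isOpen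
  · refine Set.mem_iInter₂.mpr fun i _ => ?_
    by_cases h : z ∈ Q i <;> simp [h]
  · intro w hw
    refine idx_congr Q n fun i hi => ?_
    have hwi := Set.mem_iInter₂.mp hw i (Finset.mem_range.mpr (by omega))
    by_cases h : z ∈ Q i
    · rw [if_pos h] at hwi; exact iff_of_true hwi h
    · rw [if_neg h] at hwi; exact iff_of_false hwi h


/-- Greedy coloring with fuel. -/
noncomputable def colorF {k : ℕ} (hk : 0 < k) (F : Finset Γ) (Q : ℕ → Set (Γ → B)) (n : ℕ)
    (ψ : (Γ → B) → Fin k) : ℕ → (Γ → B) → Fin k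
  | 0, z => ψ z
  | fuel + 1, z =>
    if idx Q n z = 0 then ψ z
    else freshColor hk (F.attach.image fun v =>
      if idx Q n (shift v.1 z) < idx Q n z then colorF hk F Q n ψ fuel (shift v.1 z)
      else ⟨0, hk⟩)

lemma colorF_zero {k : ℕ} (hk : 0 < k) (F : Finset Γ) (Q : ℕ → Set (Γ → B)) (n : ℕ)
    (ψ : (Γ → B) → Fin k) (fuel : ℕ) {z : Γ → B} (h : idx Q n z = 0) :
    colorF hk F Q n ψ fuel z = ψ z := by
  cases fuel <;> simp [colorF, h]

lemma colorF_stable {k : ℕ} (hk : 0 < k) (F : Finset Γ) (Q : ℕ → Set (Γ → B)) (n : ℕ)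
    (ψ : (Γ → B) → Fin k) :
    ∀ fuel fuel' (z : Γ → B), idx Q n z ≤ fuel → idx Q n z ≤ fuel' →
      colorF hk F Q n ψ fuel z = colorF hk F Q n ψ fuel' z := by
  intro fuel
  induction fuel with
  | zero =>
    intro fuel' z h1 _
    rw [colorF_zero hk F Q n ψ 0 (Nat.le_zero.mp h1),
      colorF_zero hk F Q n ψ fuel' (Nat.le_zero.mp h1)]
  | succ a ih =>
    intro fuel' z h1 h2
    by_cases h0 : idx Q n z = 0
    · rw [colorF_zero hk F Q n ψ _ h0, colorF_zero hk F Q n ψ _ h0]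
    · cases fuel' with
      | zero => omega
      | succ b =>
        simp only [colorF, if_neg h0]
        congr 1
        refine Finset.image_congr fun v _ => ?_
        by_cases hlt : idx Q n (shift v.1 z) < idx Q n z
        · rw [if_pos hlt, if_pos hlt]
          exact ih _ _ (by omega) (by omega)
        · rw [if_neg hlt, if_neg hlt]

lemma colorF_proper {k : ℕ} (hk : 0 < k) {F : Finset Γ} (hcard : F.card < k)
    (hsymF : ∀ v ∈ F, -v ∈ F) (Q : ℕ → Set (Γ → B)) (n : ℕ) (ψ : (Γ → B) → Fin k)
    (hsep : ∀ i, 0 < i → ∀ v ∈ F, ∀ z ∈ Q i, ∀ w ∈ Q i, shift v z ≠ w)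
    (hψ0 : ∀ z ∈ Q 0, ∀ v ∈ F, ψ z ≠ ψ (shift v z))
    {z : Γ → B} {v : Γ} (hv : v ∈ F) (hz : ∃ i, i ≤ n ∧ z ∈ Q i)
    (hz' : ∃ i, i ≤ n ∧ shift v z ∈ Q i) :
    colorF hk F Q n ψ (n + 1) z ≠ colorF hk F Q n ψ (n + 1) (shift v z) := by
  obtain ⟨hzn, hzQ⟩ := idx_spec Q n z hz
  obtain ⟨hzn', hzQ'⟩ := idx_spec Q n (shift v z) hz'
  have hcardim : ∀ s : Finset {v // v ∈ F}, ∀ g : {v // v ∈ F} → Fin k,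
      (s.image g).card < k :=
    fun s g => lt_of_le_of_lt (le_trans Finset.card_image_le
      (le_trans (Finset.card_le_card (Finset.subset_univ s)) (by
        rw [Finset.card_univ, Fintype.card_coe]))) hcard
  rcases lt_trichotomy (idx Q n z) (idx Q n (shift v z)) with hlt | heq | hgt
  · -- the color of `shift v z` was chosen avoiding that of `z`
    have hd' : ¬ idx Q n (shift v z) = 0 := by omega
    have key : colorF hk F Q n ψ (n + 1) z ∈ F.attach.image fun u =>
        if idx Q n (shift u.1 (shift v z)) < idx Q n (shift v z) then
          colorF hk F Q n ψ n (shift u.1 (shift v z)) else ⟨0, hk⟩ := by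
      refine Finset.mem_image.mpr ⟨⟨-v, hsymF v hv⟩, Finset.mem_attach _ _, ?_⟩
      dsimp only
      rw [shift_neg_shift, if_pos hlt]
      exact colorF_stable hk F Q n ψ n (n + 1) z (by omega) (by omega)
    have hcol : colorF hk F Q n ψ (n + 1) (shift v z) = freshColor hk
        (F.attach.image fun u =>
          if idx Q n (shift u.1 (shift v z)) < idx Q n (shift v z) then
            colorF hk F Q n ψ n (shift u.1 (shift v z)) else ⟨0, hk⟩) := by
      simp only [colorF, if_neg hd']
    rw [hcol]
    intro hcon
    exact freshColor_notMem hk (hcardim _ _) (hcon ▸ key)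
  · by_cases h0 : idx Q n z = 0
    · have h0' : idx Q n (shift v z) = 0 := by omega
      rw [colorF_zero hk F Q n ψ _ h0, colorF_zero hk F Q n ψ _ h0']
      exact hψ0 z (h0 ▸ hzQ) v hv
    · refine absurd rfl (hsep (idx Q n z) (Nat.pos_of_ne_zero h0) v hv z hzQ (shift v z) ?_)
      rw [heq]; exact hzQ'
  · -- the color of `z` was chosen avoiding that of `shift v z`
    have hd : ¬ idx Q n z = 0 := by omega
    have key : colorF hk F Q n ψ (n + 1) (shift v z) ∈ F.attach.image fun u =>
        if idx Q n (shift u.1 z) < idx Q n z then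
          colorF hk F Q n ψ n (shift u.1 z) else ⟨0, hk⟩ := by
      refine Finset.mem_image.mpr ⟨⟨v, hv⟩, Finset.mem_attach _ _, ?_⟩
      dsimp only
      rw [if_pos hgt]
      exact colorF_stable hk F Q n ψ n (n + 1) (shift v z) (by omega) (by omega)
    have hcol : colorF hk F Q n ψ (n + 1) z = freshColor hk
        (F.attach.image fun u =>
          if idx Q n (shift u.1 z) < idx Q n z then
            colorF hk F Q n ψ n (shift u.1 z) else ⟨0, hk⟩) := by
      simp only [colorF, if_neg hd]
    rw [hcol]
    intro hcon
    exact freshColor_notMem hk (hcardim _ _) (hcon ▸ key)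

lemma isLocallyConstant_colorF {k : ℕ} (hk : 0 < k) (F : Finset Γ) (Q : ℕ → Set (Γ → B))
    (n : ℕ) (ψ : (Γ → B) → Fin k) (hQ : ∀ i, IsClopen (Q i)) (hψ : IsLocallyConstant ψ) :
    ∀ fuel, IsLocallyConstant (colorF hk F Q n ψ fuel) := by
  intro fuel
  induction fuel with
  | zero =>
    have : colorF hk F Q n ψ 0 = ψ := funext fun z => rfl
    rw [this]; exact hψ
  | succ a ih =>
    rw [IsLocallyConstant.iff_exists_open]
    intro z
    obtain ⟨A, hAo, hAz, hAc⟩ := (isLocallyConstant_idx Q n hQ).exists_open z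
    obtain ⟨P, hPo, hPz, hPc⟩ := hψ.exists_open z
    choose Bv hBvo hBvz hBvc using
      fun v : {v // v ∈ F} => (isLocallyConstant_idx Q n hQ).exists_open (shift v.1 z)
    choose Cv hCvo hCvz hCvc using
      fun v : {v // v ∈ F} => ih.exists_open (shift v.1 z)
    refine ⟨A ∩ P ∩ ⋂ v ∈ F.attach, (shift v.1 ⁻¹' Bv v ∩ shift v.1 ⁻¹' Cv v), ?_, ?_, ?_⟩
    · refine (hAo.inter hPo).inter (isOpen_biInter_finset fun v _ => ?_)
      exact ((hBvo v).preimage (continuous_shift v.1)).inter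
        ((hCvo v).preimage (continuous_shift v.1))
    · refine ⟨⟨hAz, hPz⟩, Set.mem_iInter₂.mpr fun v _ => ⟨hBvz v, hCvz v⟩⟩
    · rintro w ⟨⟨hwA, hwP⟩, hwB⟩
      have hidx : idx Q n w = idx Q n z := hAc w hwA
      by_cases h0 : idx Q n z = 0
      · have h0w : idx Q n w = 0 := hidx.trans h0
        rw [colorF_zero hk F Q n ψ _ h0w, colorF_zero hk F Q n ψ _ h0]
        exact hPc w hwP
      · have h0w : ¬ idx Q n w = 0 := by rw [hidx]; exact h0
        simp only [colorF, if_neg h0, if_neg h0w]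
        congr 1
        refine Finset.image_congr fun v hv => ?_
        have hwv := Set.mem_iInter₂.mp hwB v (by simp)
        have e1 : idx Q n (shift v.1 w) = idx Q n (shift v.1 z) := hBvc v _ hwv.1
        have e2 : colorF hk F Q n ψ a (shift v.1 w) = colorF hk F Q n ψ a (shift v.1 z) :=
          hCvc v _ hwv.2
        show (if idx Q n (shift v.1 w) < idx Q n w then colorF hk F Q n ψ a (shift v.1 w)
          else ⟨0, hk⟩) = (if idx Q n (shift v.1 z) < idx Q n z then
            colorF hk F Q n ψ a (shift v.1 z) else ⟨0, hk⟩)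
        rw [hidx, e1]
        by_cases hlt : idx Q n (shift v.1 z) < idx Q n z
        · rw [if_pos hlt, if_pos hlt, e2]
        · rw [if_neg hlt, if_neg hlt]


/-- Piecewise-constant function defined by a list of pieces. -/
noncomputable def pieceFun {k : ℕ} {ι : Type} (V : ι → Set (Γ → B)) (c : ι → Fin k)
    (junk : Fin k) : List ι → (Γ → B) → Fin k
  | [], _ => junk
  | p :: L, z => if z ∈ V p then c p else pieceFun V c junk L z

lemma pieceFun_lc {k : ℕ} {ι : Type} (V : ι → Set (Γ → B)) (c : ι → Fin k) (junk : Fin k)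
    (L : List ι) (h : ∀ p ∈ L, IsClopen (V p)) :
    IsLocallyConstant (pieceFun V c junk L) := by
  induction L with
  | nil => exact IsLocallyConstant.of_constant _ fun _ _ => rfl
  | cons p L ih =>
    rw [IsLocallyConstant.iff_exists_open]
    intro z
    by_cases hz : z ∈ V p
    · exact ⟨V p, (h p (by simp)).isOpen, hz, fun w hw => by simp [pieceFun, hw, hz]⟩
    · obtain ⟨U, hUo, hUz, hUc⟩ := (ih fun q hq => h q (by simp [hq])).exists_open z
      refine ⟨U ∩ (V p)ᶜ, hUo.inter (h p (by simp)).compl.isOpen, ⟨hUz, hz⟩, ?_⟩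
      rintro w ⟨hwU, hwV⟩
      simp only [pieceFun, if_neg hwV, if_neg hz]
      exact hUc w hwU

lemma pieceFun_eq {k : ℕ} {ι : Type} (V : ι → Set (Γ → B)) (c : ι → Fin k) (junk : Fin k)
    (L : List ι) (z : Γ → B) (a : Fin k) (hz : ∃ p ∈ L, z ∈ V p)
    (hc : ∀ p ∈ L, z ∈ V p → c p = a) : pieceFun V c junk L z = a := by
  induction L with
  | nil => simp at hz
  | cons p L ih =>
    by_cases h : z ∈ V p
    · simp only [pieceFun, if_pos h]
      exact hc p (by simp) h
    · simp only [pieceFun, if_neg h]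
      refine ih ?_ fun q hq hzq => hc q (by simp [hq]) hzq
      obtain ⟨q, hq, hzq⟩ := hz
      rcases List.mem_cons.mp hq with rfl | hq'
      · exact absurd hzq h
      · exact ⟨q, hq', hzq⟩

lemma isClopen_ne_lc {α : Type*} {g h : (Γ → B) → α} (hg : IsLocallyConstant g)
    (hh : IsLocallyConstant h) : IsClopen {z | g z ≠ h z} := by
  have hp : IsLocallyConstant fun z => (g z, h z) := hg.prodMk hh
  have o1 : IsOpen ((fun z => (g z, h z)) ⁻¹' {p : α × α | p.1 ≠ p.2}) := hp _
  have o2 : IsOpen ((fun z => (g z, h z)) ⁻¹' {p : α × α | p.1 = p.2}) := hp _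
  refine ⟨?_, o1⟩
  rw [← isOpen_compl_iff]
  convert o2 using 1
  ext w
  simp

lemma isClopen_cylinder [DiscreteTopology B] (S : Finset Γ) (x : Γ → B) :
    IsClopen {z : Γ → B | ∀ γ ∈ S, z γ = x γ} := by
  have he : {z : Γ → B | ∀ γ ∈ S, z γ = x γ} = ⋂ γ ∈ S, (fun z : Γ → B => z γ) ⁻¹' {x γ} := by
    ext z; simp
  rw [he]
  constructor
  · exact isClosed_biInter fun γ _ => (isClosed_discrete _).preimage (continuous_apply γ)
  · exact isOpen_biInter_finset fun γ _ => (isOpen_discrete _).preimage (continuous_apply γ)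

lemma exists_cylinder [DiscreteTopology B] {O : Set (Γ → B)} (hO : IsOpen O) {x : Γ → B}
    (hx : x ∈ O) : ∃ S : Finset Γ, {z : Γ → B | ∀ γ ∈ S, z γ = x γ} ⊆ O := by
  have hmem : O ∈ nhds x := hO.mem_nhds hx
  rw [nhds_pi] at hmem
  obtain ⟨I, t, htf, hsub⟩ := Filter.mem_pi'.mp hmem
  refine ⟨I, fun z hz => hsub ?_⟩
  intro γ hγ
  have ht : t γ ∈ nhds (x γ) := htf γ
  have hxt : x γ ∈ t γ := by
    have := nhds_discrete B
    rw [this] at ht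
    exact ht
  rw [hz γ hγ]
  exact hxt

end Aux

/-- `X ⇝ Y`. -/
def Squig {Γ A B : Type*} [AddCommGroup Γ] (X : Set (Γ → A)) (Y : Set (Γ → B)) : Prop :=
  ∀ x ∈ X, ∃ y ∈ Y, ∀ g : Γ, shift g x = x → shift g y = y

/-- The map extension property for a subshift `Y`. -/
def MapExtensionProperty {Γ A : Type*} [AddCommGroup Γ] [TopologicalSpace A]
    (Y : Set (Γ → A)) : Prop :=
  ∀ (B : Type) (_ : Fintype B) (tB : TopologicalSpace B) (_ : @DiscreteTopology B tB)
    (X Xt : Set (Γ → B)), IsSubshift X → IsSubshift Xt → Xt ⊆ X → Squig X Y →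
    ∀ f : (Γ → B) → (Γ → A), IsSubshiftMap Xt Y f →
      ∃ F : (Γ → B) → (Γ → A), IsSubshiftMap X Y F ∧ ∀ x ∈ Xt, F x = f x

/-- The subshift of proper `k`-colorings of the Cayley graph of `Γ` with respect to a
finite symmetric set `F ⊂ Γ \ {0}` has the map extension property whenever `k > |F|`. -/
theorem stmt13 {Γ : Type} [AddCommGroup Γ] [Countable Γ]
    (F : Finset Γ) (h0 : (0 : Γ) ∉ F) (hsym : ∀ v ∈ F, -v ∈ F)
    (k : ℕ) (hk : F.card < k) :
    MapExtensionProperty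
      {x : Γ → Fin k | ∀ γ : Γ, ∀ v ∈ F, x γ ≠ x (γ + v)} := by
  intro B fB tB dB X Xt hX hXt hsub hsquig f hf
  classical
  have hk0 : 0 < k := lt_of_le_of_lt (Nat.zero_le _) hk
  haveI : Finite B := Finite.of_fintype B
  haveI : CompactSpace (Γ → B) := inferInstance
  -- no point of `X` is fixed by a shift by an element of `F`
  have hfree : ∀ x ∈ X, ∀ v ∈ F, shift v x ≠ x := by
    intro x hx v hv hcon
    obtain ⟨y, hy, hstab⟩ := hsquig x hx
    have hyv := hstab v hcon
    have h0' : y 0 ≠ y (0 + v) := hy 0 v hv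
    apply h0'
    have := congrFun hyv 0
    simpa [shift] using this.symm
  -- separating clopen neighbourhoods
  have hsepnb : ∀ x : Γ → B, x ∈ X →
      ∃ U, IsClopen U ∧ x ∈ U ∧ ∀ v ∈ F, ∀ z ∈ U, ∀ w ∈ U, shift v z ≠ w := by
    intro x hx
    have hg : ∀ v : {v // v ∈ F}, ∃ γ, x (γ + v.1) ≠ x γ := by
      intro v
      have hne := hfree x hx v.1 v.2
      rw [Function.ne_iff] at hne
      obtain ⟨γ, hγ⟩ := hne
      exact ⟨γ, by simpa [shift] using hγ⟩
    choose g hgspec using hg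
    set S : Finset Γ := F.attach.biUnion (fun v => {g v, g v + v.1}) with hS
    refine ⟨{z | ∀ γ ∈ S, z γ = x γ}, isClopen_cylinder S x, fun γ _ => rfl, ?_⟩
    intro v hv z hz w hw hcon
    have hmem1 : g ⟨v, hv⟩ + v ∈ S := by
      refine Finset.mem_biUnion.mpr ⟨⟨v, hv⟩, Finset.mem_attach _ _, by simp⟩
    have hmem2 : g ⟨v, hv⟩ ∈ S := by
      refine Finset.mem_biUnion.mpr ⟨⟨v, hv⟩, Finset.mem_attach _ _, by simp⟩
    have h1 : z (g ⟨v, hv⟩ + v) = x (g ⟨v, hv⟩ + v) := hz _ hmem1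
    have h2 : w (g ⟨v, hv⟩) = x (g ⟨v, hv⟩) := hw _ hmem2
    have h3 := congrFun hcon (g ⟨v, hv⟩)
    apply hgspec ⟨v, hv⟩
    rw [← h1, ← h2]
    simpa [shift] using h3
  -- clopen neighbourhoods on which `f · 0` is constant
  have hconb : ∀ p : {z // z ∈ Xt},
      ∃ V, IsClopen V ∧ p.1 ∈ V ∧ ∀ z ∈ V, z ∈ Xt → f z 0 = f p.1 0 := by
    rintro ⟨p, hp⟩
    have hc : ContinuousWithinAt f Xt p := hf.1 p hp
    have hopen : {y : Γ → Fin k | y 0 = f p 0} ∈ nhds (f p) := by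
      have ho : IsOpen {y : Γ → Fin k | y 0 = f p 0} := by
        have h1 : {y : Γ → Fin k | y 0 = f p 0}
            = (fun y : Γ → Fin k => y 0) ⁻¹' {f p 0} := rfl
        rw [h1]
        exact (isOpen_discrete _).preimage (continuous_apply 0)
      exact ho.mem_nhds rfl
    have hmem := hc hopen
    rw [Filter.mem_map, mem_nhdsWithin] at hmem
    obtain ⟨O, hOo, hOp, hOsub⟩ := hmem
    obtain ⟨S, hS⟩ := exists_cylinder hOo hOp
    refine ⟨{z | ∀ γ ∈ S, z γ = p γ}, isClopen_cylinder S p, fun γ _ => rfl, ?_⟩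
    intro z hz hzt
    exact hOsub ⟨hS hz, hzt⟩
  -- finite subcovers
  have hXc : IsCompact X := hX.1.isCompact
  choose Us hUclo hUmem hUsep using fun p : {z // z ∈ X} => hsepnb p.1 p.2
  obtain ⟨s, hs⟩ := hXc.elim_finite_subcover Us (fun p => (hUclo p).isOpen)
    (fun x hx => Set.mem_iUnion.mpr ⟨⟨x, hx⟩, hUmem _⟩)
  have hXtc : IsCompact Xt := hXt.1.isCompact
  choose Vs hVclo hVmem hVconst using hconb
  obtain ⟨t, ht⟩ := hXtc.elim_finite_subcover Vs (fun p => (hVclo p).isOpen)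
    (fun x hx => Set.mem_iUnion.mpr ⟨⟨x, hx⟩, hVmem _⟩)
  -- the locally constant partial coloring ψ
  obtain ⟨ψ, hψlc, hψXt⟩ : ∃ ψ : (Γ → B) → Fin k,
      IsLocallyConstant ψ ∧ ∀ x ∈ Xt, ψ x = f x 0 := by
    refine ⟨pieceFun Vs (fun p => f p.1 0) ⟨0, hk0⟩ t.toList, 
      pieceFun_lc _ _ _ _ (fun p _ => hVclo p), ?_⟩
    intro x hx
    have hcover : ∃ p ∈ t.toList, x ∈ Vs p := by
      have hxm := ht hx
      rw [Set.mem_iUnion₂] at hxm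
      obtain ⟨p, hpt, hxp⟩ := hxm
      exact ⟨p, Finset.mem_toList.mpr hpt, hxp⟩
    refine pieceFun_eq _ _ _ _ _ _ hcover ?_
    intro p _ hxp
    exact (hVconst p x hxp hx).symm
  -- `ψ` is a proper coloring on `Xt`
  have hXtW : ∀ x ∈ Xt, ∀ v ∈ F, ψ x ≠ ψ (shift v x) := by
    intro x hx v hv
    have hsx : shift v x ∈ Xt := hXt.2 v x hx
    rw [hψXt x hx, hψXt _ hsx, hf.2.2 v x hx]
    have he : shift v (f x) 0 = f x (0 + v) := rfl
    rw [he]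
    exact hf.2.1 x hx 0 v hv
  have hWclo : IsClopen {z : Γ → B | ∀ v ∈ F, ψ z ≠ ψ (shift v z)} := by
    have he : {z : Γ → B | ∀ v ∈ F, ψ z ≠ ψ (shift v z)}
        = ⋂ v ∈ F, {z | ψ z ≠ ψ (shift v z)} := by
      ext z; simp
    rw [he]
    constructor
    · exact isClosed_biInter fun v _ =>
        (isClopen_ne_lc hψlc (hψlc.comp_continuous (continuous_shift v))).isClosed
    · exact isOpen_biInter_finset fun v _ =>
        (isClopen_ne_lc hψlc (hψlc.comp_continuous (continuous_shift v))).isOpen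
  -- the pieces
  obtain ⟨nn, Q, hQclo, hQsep, hQ0, hXtQ0, hcov⟩ :
      ∃ (nn : ℕ) (Q : ℕ → Set (Γ → B)), (∀ i, IsClopen (Q i)) ∧
        (∀ i, 0 < i → ∀ v ∈ F, ∀ z ∈ Q i, ∀ w ∈ Q i, shift v z ≠ w) ∧
        (∀ z ∈ Q 0, ∀ v ∈ F, ψ z ≠ ψ (shift v z)) ∧
        (∀ x ∈ Xt, x ∈ Q 0) ∧ (∀ x ∈ X, ∃ i, i ≤ nn ∧ x ∈ Q i) := by
    refine ⟨s.toList.length, fun i =>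
      if i = 0 then {z : Γ → B | ∀ v ∈ F, ψ z ≠ ψ (shift v z)}
      else if h : i - 1 < s.toList.length then Us (s.toList.get ⟨i - 1, h⟩) else ∅,
      ?_, ?_, ?_, ?_, ?_⟩
    · intro i
      beta_reduce
      split_ifs
      · exact hWclo
      · exact hUclo _
      · exact isClopen_empty
    · intro i hi v hv z hz w hw
      beta_reduce at hz hw
      rw [if_neg (by omega : ¬ i = 0)] at hz hw
      by_cases h : i - 1 < s.toList.length
      · rw [dif_pos h] at hz hw
        exact hUsep _ v hv z hz w hw
      · rw [dif_neg h] at hz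
        exact absurd hz (Set.notMem_empty z)
    · intro z hz v hv
      beta_reduce at hz
      rw [if_pos rfl] at hz
      exact hz v hv
    · intro x hx
      beta_reduce
      rw [if_pos rfl]
      exact fun v hv => hXtW x hx v hv
    · intro x hx
      have hxm := hs hx
      rw [Set.mem_iUnion₂] at hxm
      obtain ⟨p, hps, hxp⟩ := hxm
      obtain ⟨i, hi⟩ := List.mem_iff_get.mp (Finset.mem_toList.mpr hps)
      refine ⟨i.1 + 1, by omega, ?_⟩
      beta_reduce
      rw [if_neg (Nat.succ_ne_zero _), dif_pos (by simpa using i.2)]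
      have : (⟨i.1 + 1 - 1, by simpa using i.2⟩ : Fin s.toList.length) = i :=
        Fin.ext (by simp)
      rw [this, hi]
      exact hxp
  -- the global coloring
  obtain ⟨φ, hφlc, hφprop, hφXt⟩ : ∃ φ : (Γ → B) → Fin k, IsLocallyConstant φ ∧
      (∀ z ∈ X, ∀ v ∈ F, φ z ≠ φ (shift v z)) ∧ (∀ z ∈ Xt, φ z = f z 0) := by
    refine ⟨colorF hk0 F Q nn ψ (nn + 1),
      isLocallyConstant_colorF hk0 F Q nn ψ hQclo hψlc (nn + 1), ?_, ?_⟩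
    · intro z hz v hv
      exact colorF_proper hk0 hk hsym Q nn ψ hQsep hQ0 hv (hcov z hz) (hcov _ (hX.2 v z hz))
    · intro z hz
      have h0' : idx Q nn z = 0 :=
        Nat.le_zero.mp (idx_min Q nn z (Nat.zero_le _) (hXtQ0 z hz))
      rw [colorF_zero hk0 F Q nn ψ _ h0']
      exact hψXt z hz
  -- assemble the extension
  refine ⟨fun x γ => φ (shift γ x), ⟨?_, ?_, ?_⟩, ?_⟩
  · refine Continuous.continuousOn (continuous_pi fun γ => ?_)
    exact hφlc.continuous.comp (continuous_shift γ)
  · intro x hx γ v hv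
    show φ (shift γ x) ≠ φ (shift (γ + v) x)
    have he : shift (γ + v) x = shift v (shift γ x) := by
      rw [shift_shift, add_comm]
    rw [he]
    exact hφprop _ (hX.2 γ x hx) v hv
  · intro g x hx
    funext γ
    show φ (shift γ (shift g x)) = φ (shift (γ + g) x)
    rw [shift_shift]
  · intro x hx
    funext γ
    show φ (shift γ x) = f x γ
    rw [hφXt _ (hXt.2 γ x hx), hf.2.2 γ x hx]
    show f x (0 + γ) = f x γ
    rw [zero_add]
end
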